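/- Let V be a finite-dimensional real inner product space and let ρ : [0,∞) → ℝ be continuously differentiable with ρ(s) + 2s·ρ′(s) ≥ κ₁ for all s ≥ 0, where κ₁ > 0. Then the map a ↦ ρ(‖a‖²)·a is strongly monotone: for all a, b ∈ V, ⟨ρ(‖a‖²)·a − ρ(‖b‖²)·b, a − b⟩ ≥ κ₁·‖a − b‖². -/

import Mathlib

open scoped RealInnerProductSpace

/-!
Along the segment `c t = b + t • (a - b)`, the derivative of `t ↦ ⟪ρ(‖c t‖²) • c t, a - b⟫` is
`2ρ'(n)⟪c, a - b⟫² + ρ(n)‖a - b‖²` with `n = ‖c t‖²`. By Cauchy–Schwarz `⟪c, a - b⟫² ≤ n‖a - b‖²`,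
so this is at least `(ρ(n) + 2nρ'(n))‖a - b‖² ≥ κ₁‖a - b‖²` when `ρ'(n) < 0`, and at least
`ρ(n)‖a - b‖²` otherwise; the mean value theorem then gives the claim once `ρ ≥ κ₁` is known.
That bound is the one-dimensional case of the same computation: on `ℝ`, with `b = 0`,
Cauchy–Schwarz is an equality and the derivative is exactly `(ρ(n) + 2nρ'(n))‖a‖²`.
-/

section StronglyMonotone

variable {E : Type*} [NormedAddCommGroup E] [InnerProductSpace ℝ E] {ρ ρ' : ℝ → ℝ} {κ : ℝ}

theorem hasDerivAt_inner_smul_segment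
    (hder : ∀ s ∈ Set.Ici (0:ℝ), HasDerivWithinAt ρ (ρ' s) (Set.Ici (0:ℝ)) s) (b d : E) (t : ℝ) :
    HasDerivAt (fun t : ℝ => ⟪ρ (‖b + t • d‖ ^ 2) • (b + t • d), d⟫)
      (2 * ρ' (‖b + t • d‖ ^ 2) * ⟪b + t • d, d⟫ ^ 2 + ρ (‖b + t • d‖ ^ 2) * ‖d‖ ^ 2) t := by
  have hc : HasDerivAt (fun t : ℝ => b + t • d) d t := by
    simpa using ((hasDerivAt_id t).smul_const d).const_add b
  have hρ : HasDerivAt (fun t : ℝ => ρ (‖b + t • d‖ ^ 2))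
      (2 * ⟪b + t • d, d⟫ * ρ' (‖b + t • d‖ ^ 2)) t :=
    (hder (‖b + t • d‖ ^ 2) (Set.mem_Ici.2 (sq_nonneg _))).scomp_hasDerivAt t hc.norm_sq
      fun _ => Set.mem_Ici.2 (sq_nonneg _)
  have hinner : HasDerivAt (fun t : ℝ => ⟪b + t • d, d⟫) (‖d‖ ^ 2) t := by
    simpa [real_inner_self_eq_norm_sq] using hc.inner ℝ (hasDerivAt_const t d)
  have hprod : HasDerivAt (fun t : ℝ => ρ (‖b + t • d‖ ^ 2) * ⟪b + t • d, d⟫)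
      (2 * ρ' (‖b + t • d‖ ^ 2) * ⟪b + t • d, d⟫ ^ 2 + ρ (‖b + t • d‖ ^ 2) * ‖d‖ ^ 2) t :=
    (hρ.mul hinner).congr_deriv (by ring)
  simpa only [← real_inner_smul_left] using hprod

theorem le_inner_smul_sub_smul_of_le_deriv
    (hder : ∀ s ∈ Set.Ici (0:ℝ), HasDerivWithinAt ρ (ρ' s) (Set.Ici (0:ℝ)) s) (b d : E) {C : ℝ}
    (hC : ∀ t : ℝ,
      C ≤ 2 * ρ' (‖b + t • d‖ ^ 2) * ⟪b + t • d, d⟫ ^ 2 + ρ (‖b + t • d‖ ^ 2) * ‖d‖ ^ 2) :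
    C ≤ ⟪ρ (‖b + d‖ ^ 2) • (b + d) - ρ (‖b‖ ^ 2) • b, d⟫ := by
  have hG := hasDerivAt_inner_smul_segment hder b d
  have := mul_sub_le_image_sub_of_le_deriv (fun t => (hG t).differentiableAt)
    (fun t => (hG t).deriv ▸ hC t) zero_le_one
  simpa [inner_sub_left] using this

theorem mul_sq_le_mul_sq_of_le_add_two_mul_mul_deriv
    (hder : ∀ s ∈ Set.Ici (0:ℝ), HasDerivWithinAt ρ (ρ' s) (Set.Ici (0:ℝ)) s)
    (h : ∀ s ∈ Set.Ici (0:ℝ), κ ≤ ρ s + 2 * s * ρ' s) (u : ℝ) : κ * u ^ 2 ≤ ρ (u ^ 2) * u ^ 2 := by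
  have := le_inner_smul_sub_smul_of_le_deriv hder (0:ℝ) u (C := κ * u ^ 2) fun t => by
    simp only [zero_add, smul_eq_mul, Real.norm_eq_abs, sq_abs, Real.inner_apply]
    nlinarith [h ((t * u) ^ 2) (Set.mem_Ici.2 (sq_nonneg _)), sq_nonneg u]
  simp only [zero_add, smul_eq_mul, Real.inner_apply, mul_zero, sub_zero, Real.norm_eq_abs,
    sq_abs] at this
  linarith

theorem le_of_le_add_two_mul_mul_deriv
    (hder : ∀ s ∈ Set.Ici (0:ℝ), HasDerivWithinAt ρ (ρ' s) (Set.Ici (0:ℝ)) s)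
    (h : ∀ s ∈ Set.Ici (0:ℝ), κ ≤ ρ s + 2 * s * ρ' s) {s : ℝ} (hs : 0 ≤ s) : κ ≤ ρ s := by
  rcases hs.eq_or_lt with rfl | hs
  · simpa using h 0 Set.self_mem_Ici
  have := mul_sq_le_mul_sq_of_le_add_two_mul_mul_deriv hder h √s
  rw [Real.sq_sqrt hs.le] at this
  exact le_of_mul_le_mul_right this hs

theorem mul_le_mul_add_two_mul_deriv_mul_sq
    (hder : ∀ s ∈ Set.Ici (0:ℝ), HasDerivWithinAt ρ (ρ' s) (Set.Ici (0:ℝ)) s)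
    (h : ∀ s ∈ Set.Ici (0:ℝ), κ ≤ ρ s + 2 * s * ρ' s) {s p q : ℝ} (hs : 0 ≤ s) (hq : 0 ≤ q)
    (hpq : p ^ 2 ≤ s * q) : κ * q ≤ 2 * ρ' s * p ^ 2 + ρ s * q := by
  rcases le_or_gt 0 (ρ' s) with hρ' | hρ'
  · nlinarith [le_of_le_add_two_mul_mul_deriv hder h hs, sq_nonneg p]
  · nlinarith [h s hs]

end StronglyMonotone

theorem stmt_12_general (V : Type*) [NormedAddCommGroup V] [InnerProductSpace ℝ V]
    (ρ ρ' : ℝ → ℝ) (κ₁ : ℝ)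
    (hder : ∀ s ∈ Set.Ici (0:ℝ), HasDerivWithinAt ρ (ρ' s) (Set.Ici (0:ℝ)) s)
    (h : ∀ s ∈ Set.Ici (0:ℝ), κ₁ ≤ ρ s + 2 * s * ρ' s) :
    ∀ a b : V, κ₁ * ‖a - b‖ ^ 2 ≤ ⟪ρ (‖a‖ ^ 2) • a - ρ (‖b‖ ^ 2) • b, a - b⟫ := by
  intro a b
  rw [← add_sub_cancel b a, add_sub_cancel_left]
  refine le_inner_smul_sub_smul_of_le_deriv hder b (a - b) fun t => ?_
  refine mul_le_mul_add_two_mul_deriv_mul_sq hder h (sq_nonneg _) (sq_nonneg _) ?_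
  simpa [sq_abs, mul_pow] using pow_le_pow_left₀ (abs_nonneg _) (abs_real_inner_le_norm _ _) 2

/-- Strong monotonicity of `a ↦ ρ(‖a‖²)·a` on a finite-dimensional real
inner product space, under the lower uniform ellipticity bound
`ρ(s) + 2s·ρ′(s) ≥ κ₁ > 0`. -/
theorem stmt_12 (V : Type*) [NormedAddCommGroup V] [InnerProductSpace ℝ V]
    [FiniteDimensional ℝ V]
    (ρ ρ' : ℝ → ℝ) (κ₁ : ℝ) (hκ : 0 < κ₁)
    (hder : ∀ s ∈ Set.Ici (0:ℝ), HasDerivWithinAt ρ (ρ' s) (Set.Ici (0:ℝ)) s)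
    (hcont : ContinuousOn ρ' (Set.Ici (0:ℝ)))
    (h : ∀ s ∈ Set.Ici (0:ℝ), κ₁ ≤ ρ s + 2 * s * ρ' s) :
    ∀ a b : V, κ₁ * ‖a - b‖ ^ 2 ≤ ⟪ρ (‖a‖ ^ 2) • a - ρ (‖b‖ ^ 2) • b, a - b⟫ :=
  stmt_12_general V ρ ρ' κ₁ hder h
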